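/- Let n ≥ 2 and let F : [0,1]^3 → [0,1]^3 implement the basic coloring f₀ⁿ. Then every fixpoint of F lies within L∞ distance 2^{-n} of the point 2^{-n}(1,1,1). -/

import Mathlib

/-!
At a fixpoint `x`, the vector `0 = F x - x` lies in the convex hull of the displacements of the
cubelets near `x`. Any three of `δ₀, …, δ₃` lie on an affine hyperplane avoiding `0`, so all four
colours occur within distance `2^{-n}` of `x`. In the basic colouring, colour `m + 1` occurs only
where the `m`-th index vanishes and colour `m + 2` (mod 4) only where it does not, which confines
every coordinate of `x` to `[2^{-n}/2, 3 · 2^{-n}/2]`.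
-/

/-- α = 2^{-2n} -/
noncomputable def alphaOf (n : ℕ) : ℝ := 2 ^ (-(2 * n : ℤ))

/-- The displacement vectors δ_0 = (−α,−α,−α), δ_1 = (α,0,0), δ_2 = (0,α,0), δ_3 = (0,0,α). -/
noncomputable def deltaOf (n : ℕ) (c : Fin 4) : Fin 3 → ℝ :=
  if c = 0 then (fun _ => -alphaOf n)
  else if c = 1 then (fun m => if m = 0 then alphaOf n else 0)
  else if c = 2 then (fun m => if m = 1 then alphaOf n else 0)
  else (fun m => if m = 2 then alphaOf n else 0)

/-- Center of the cubelet K_{ijk}: the point 2^{-n}(i + 1/2, j + 1/2, k + 1/2). -/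
noncomputable def cubeletCenter (n : ℕ) (i j k : Fin (2 ^ n)) : Fin 3 → ℝ :=
  fun m => (2 : ℝ) ^ (-(n : ℤ)) * (((![(i : ℕ), (j : ℕ), (k : ℕ)] m : ℕ) : ℝ) + 1 / 2)

/-- A cubelet K_{ijk} is exterior if some index equals 0 or 2^n − 1. -/
def ExteriorCubelet (n : ℕ) (i j k : Fin (2 ^ n)) : Prop :=
  i.val = 0 ∨ j.val = 0 ∨ k.val = 0 ∨
    i.val = 2 ^ n - 1 ∨ j.val = 2 ^ n - 1 ∨ k.val = 2 ^ n - 1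

/-- The bmf boundary conditions on a coloring f. -/
def BMFBoundary (n : ℕ) (f : Fin (2 ^ n) → Fin (2 ^ n) → Fin (2 ^ n) → Fin 4) : Prop :=
  ∀ i j k : Fin (2 ^ n),
    (i.val = 0 → f i j k = 1) ∧
    (j.val = 0 → 0 < i.val → f i j k = 2) ∧
    (k.val = 0 → 0 < i.val → 0 < j.val → f i j k = 3) ∧
    (ExteriorCubelet n i j k → 0 < i.val → 0 < j.val → 0 < k.val → f i j k = 0)

/-- A continuous map F : [0,1]³ → [0,1]³ implements the coloring f :
(a) at each cubelet center, F(x) = x + δ_{f(i,j,k)};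
(b) everywhere, F(x) − x lies in the convex hull of the δ-vectors of the cubelets
whose centers lie within L∞ distance 2^{-n} of x. -/
def Implements (n : ℕ) (f : Fin (2 ^ n) → Fin (2 ^ n) → Fin (2 ^ n) → Fin 4)
    (F : (Fin 3 → ℝ) → Fin 3 → ℝ) : Prop :=
  ContinuousOn F (Set.Icc 0 1) ∧
  Set.MapsTo F (Set.Icc 0 1) (Set.Icc 0 1) ∧
  (∀ i j k : Fin (2 ^ n),
    F (cubeletCenter n i j k) = cubeletCenter n i j k + deltaOf n (f i j k)) ∧
  (∀ x ∈ Set.Icc (0 : Fin 3 → ℝ) 1,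
    F x - x ∈ convexHull ℝ
      {v : Fin 3 → ℝ | ∃ i j k : Fin (2 ^ n),
        dist x (cubeletCenter n i j k) ≤ (2 : ℝ) ^ (-(n : ℤ)) ∧ v = deltaOf n (f i j k)})

/-- The basic coloring f₀ⁿ: colors forced by the bmf boundary conditions, and 0 everywhere else. -/
def basicColoring (n : ℕ) : Fin (2 ^ n) → Fin (2 ^ n) → Fin (2 ^ n) → Fin 4 :=
  fun i j k =>
    if i.val = 0 then 1
    else if j.val = 0 then 2
    else if k.val = 0 then 3
    else 0

open Matrix

theorem zero_notMem_convexHull_of_forall_eq {𝕜 E : Type*} [Field 𝕜] [LinearOrder 𝕜]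
    [IsStrictOrderedRing 𝕜] [AddCommGroup E] [Module 𝕜 E] (ℓ : E →ₗ[𝕜] 𝕜) {S : Set E} {r : 𝕜}
    (hr : r ≠ 0) (hS : ∀ v ∈ S, ℓ v = r) : (0 : E) ∉ convexHull 𝕜 S := fun h0 => by
  have : ℓ 0 = r := convexHull_min (t := {v | ℓ v = r}) hS (convex_hyperplane ℓ.isLinear r) h0
  exact hr (by simpa using this.symm)

def missingColorWeights (c : Fin 4) : Fin 3 → ℝ := fun m => if c = m.succ then -3 else 1

theorem missingColorWeights_dotProduct_deltaOf (n : ℕ) {c d : Fin 4} (hdc : d ≠ c) :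
    missingColorWeights c ⬝ᵥ deltaOf n d = alphaOf n := by
  fin_cases c <;> fin_cases d <;>
    simp_all [missingColorWeights, deltaOf, dotProduct, Fin.sum_univ_three] <;> ring

theorem mem_of_zero_mem_convexHull_image_deltaOf (n : ℕ) {C : Set (Fin 4)}
    (h0 : (0 : Fin 3 → ℝ) ∈ convexHull ℝ (deltaOf n '' C)) (c : Fin 4) : c ∈ C := by
  by_contra hc
  refine zero_notMem_convexHull_of_forall_eq (dotProductBilin ℝ ℝ (missingColorWeights c))
    (r := alphaOf n) (by unfold alphaOf; positivity) ?_ h0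
  rintro _ ⟨d, hd, rfl⟩
  exact missingColorWeights_dotProduct_deltaOf n (ne_of_mem_of_not_mem hd hc)

def nearbyColors (n : ℕ) (f : Fin (2 ^ n) → Fin (2 ^ n) → Fin (2 ^ n) → Fin 4)
    (x : Fin 3 → ℝ) : Set (Fin 4) :=
  {c | ∃ i j k : Fin (2 ^ n), dist x (cubeletCenter n i j k) ≤ (2 : ℝ) ^ (-(n : ℤ)) ∧ f i j k = c}

theorem Implements.mem_nearbyColors_of_fixed {n : ℕ}
    {f : Fin (2 ^ n) → Fin (2 ^ n) → Fin (2 ^ n) → Fin 4} {F : (Fin 3 → ℝ) → Fin 3 → ℝ}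
    (hF : Implements n f F) {x : Fin 3 → ℝ} (hx : x ∈ Set.Icc (0 : Fin 3 → ℝ) 1)
    (hfix : F x = x) (c : Fin 4) : c ∈ nearbyColors n f x := by
  have h0 := hF.2.2.2 x hx
  rw [hfix, sub_self] at h0
  refine mem_of_zero_mem_convexHull_image_deltaOf n ?_ c
  convert h0 using 2
  ext v
  simp [nearbyColors, eq_comm]

theorem abs_sub_cubeletCenter_le {n : ℕ} {x : Fin 3 → ℝ} {i j k : Fin (2 ^ n)}
    (h : dist x (cubeletCenter n i j k) ≤ (2 : ℝ) ^ (-(n : ℤ))) (m : Fin 3) :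
    |x m - (2 : ℝ) ^ (-(n : ℤ)) * (((![(i : ℕ), (j : ℕ), (k : ℕ)] m : ℕ) : ℝ) + 1 / 2)| ≤
      (2 : ℝ) ^ (-(n : ℤ)) :=
  (dist_pi_le_iff (by positivity)).1 h m

theorem basicColoring_index_eq_zero {n : ℕ} {i j k : Fin (2 ^ n)} (m : Fin 3)
    (h : basicColoring n i j k = m.succ) : ![(i : ℕ), (j : ℕ), (k : ℕ)] m = 0 := by
  unfold basicColoring at h
  fin_cases m <;> split_ifs at h <;> simp_all

theorem basicColoring_index_ne_zero {n : ℕ} {i j k : Fin (2 ^ n)} (m : Fin 3)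
    (h : basicColoring n i j k = m.succ + 1) : ![(i : ℕ), (j : ℕ), (k : ℕ)] m ≠ 0 := by
  unfold basicColoring at h
  fin_cases m <;> split_ifs at h <;> simp_all

theorem fixpoint_of_basic_near_corner (n : ℕ)
    (F : (Fin 3 → ℝ) → Fin 3 → ℝ) (hF : Implements n (basicColoring n) F)
    (x : Fin 3 → ℝ) (hx : x ∈ Set.Icc (0 : Fin 3 → ℝ) 1) (hfix : F x = x) :
    dist x (fun _ : Fin 3 => (2 : ℝ) ^ (-(n : ℤ))) ≤ (2 : ℝ) ^ (-(n : ℤ)) := by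
  have hh : (0 : ℝ) < 2 ^ (-(n : ℤ)) := by positivity
  refine (dist_pi_le_iff hh.le).2 fun m => ?_
  obtain ⟨i, j, k, hd, hc⟩ := hF.mem_nearbyColors_of_fixed hx hfix m.succ
  obtain ⟨i', j', k', hd', hc'⟩ := hF.mem_nearbyColors_of_fixed hx hfix (m.succ + 1)
  have hlow := abs_le.1 (abs_sub_cubeletCenter_le hd m)
  have hhigh := abs_le.1 (abs_sub_cubeletCenter_le hd' m)
  rw [basicColoring_index_eq_zero m hc, Nat.cast_zero] at hlow
  have hpos : (1 : ℝ) ≤ ((![(i' : ℕ), (j' : ℕ), (k' : ℕ)] m : ℕ) : ℝ) := by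
    exact_mod_cast Nat.one_le_iff_ne_zero.2 (basicColoring_index_ne_zero m hc')
  rw [Real.dist_eq, abs_le]
  constructor <;> nlinarith
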